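/- Let I = (0,1) with Lebesgue measure μ, g > 0, and ũ, H ∈ L^∞(I;ℝ) with essinf_I H > 0. A complex number c is an eigenvalue of A₀ (i.e. there exists a nonzero φ ∈ L²(I;ℂ)² with A₀φ = cφ) if and only if either [(c − ũ)⁻¹ ∈ L⁴(I) and ∫₀¹ g H(λ)/(c − ũ(λ))² dλ = 1] or [μ{λ ∈ I : ũ(λ) = c} > 0]. -/

import Mathlib

/-!
Where `ũ ≠ c` a.e., the eigenvalue equations can be solved explicitly: with `M = ∫ φ₁`,
`φ₂ = g M / (c - ũ)` and `φ₁ = g M H / (c - ũ)²`, and `M ≠ 0` unless `φ = 0`. Integrating `φ₁`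
gives `F(c) = 1`, and since `H` is bounded below by a positive constant, `φ₁ ∈ L²` forces
`(c - ũ)⁻¹ ∈ L⁴`. Conversely, these formulas with `M = 1` define an eigenvector. If `{ũ = c}` has
positive measure, any nonzero mean-zero function supported on it, paired with `0`, is an
eigenvector.
-/

open MeasureTheory

/-- Lebesgue measure restricted to the interval `I = (0,1)`. -/
noncomputable def μ01 : Measure ℝ := volume.restrict (Set.Ioo 0 1)

open Filter
open scoped ENNReal

section General

variable {α : Type*} [MeasurableSpace α] {μ : Measure α}

lemma memLp_four_iff_memLp_two_sq {𝕜 : Type*} [NormedDivisionRing 𝕜] {f : α → 𝕜}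
    (hf : AEStronglyMeasurable f μ) : MemLp f 4 μ ↔ MemLp (fun x => f x ^ 2) 2 μ := by
  have h42 : (2 : ℝ≥0∞) = 4 / 2 :=
    (ENNReal.eq_div_iff two_ne_zero ENNReal.ofNat_ne_top).2 (by norm_num)
  rw [← memLp_norm_rpow_iff (q := 2) hf two_ne_zero ENNReal.ofNat_ne_top, ← h42,
    ← memLp_norm_iff (f := fun x => f x ^ 2) (hf.pow 2)]
  simp [norm_pow]

lemma MemLp.of_mul_left_of_le_norm {𝕜 : Type*} [NormedDivisionRing 𝕜] {p : ℝ≥0∞}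
    {h f : α → 𝕜} {δ : ℝ} (hhf : MemLp (fun x => h x * f x) p μ)
    (hf : AEStronglyMeasurable f μ) (hδ : 0 < δ) (hh : ∀ᵐ x ∂μ, δ ≤ ‖h x‖) : MemLp f p μ := by
  refine hhf.of_le_mul (c := δ⁻¹) hf ?_
  filter_upwards [hh] with x hx
  rw [norm_mul, ← mul_assoc, ← div_eq_inv_mul]
  exact le_mul_of_one_le_left (norm_nonneg _) ((one_le_div hδ).2 hx)

lemma MemLp.ae_essInf_le {f : α → ℝ} (hf : MemLp f ∞ μ) : ∀ᵐ x ∂μ, essInf f μ ≤ f x := by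
  obtain ⟨C, hC⟩ := eLpNormEssSup_lt_top_iff_isBoundedUnder.1 (by simpa using hf.2)
  refine _root_.ae_essInf_le (isBoundedUnder_of_eventually_ge (a := -(C : ℝ)) ?_)
  filter_upwards [hC] with x hx
  exact neg_le_of_abs_le (by exact_mod_cast hx)

end General

section Operator

variable {α : Type*} [MeasurableSpace α] {μ : Measure α} {g : ℝ} {u H : α → ℝ} {c : ℂ}

variable (μ) in
def IsA₀ (g : ℝ) (u H : α → ℝ)
    (A : (Lp ℂ 2 μ × Lp ℂ 2 μ) →L[ℂ] (Lp ℂ 2 μ × Lp ℂ 2 μ)) : Prop :=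
  ∀ φ : Lp ℂ 2 μ × Lp ℂ 2 μ,
    ((A φ).1 : α → ℂ) =ᵐ[μ]
      (fun x => (u x : ℂ) * (φ.1 : α → ℂ) x + (H x : ℂ) * (φ.2 : α → ℂ) x) ∧
    ((A φ).2 : α → ℂ) =ᵐ[μ]
      (fun x => (g : ℂ) * (∫ y, (φ.1 : α → ℂ) y ∂μ) + (u x : ℂ) * (φ.2 : α → ℂ) x)

variable (μ) in
def A₀EigenEq (g : ℝ) (u H : α → ℝ) (c : ℂ) (f₁ f₂ : α → ℂ) : Prop :=
  (fun x => (u x : ℂ) * f₁ x + (H x : ℂ) * f₂ x) =ᵐ[μ] (fun x => c * f₁ x) ∧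
  (fun x => (g : ℂ) * (∫ y, f₁ y ∂μ) + (u x : ℂ) * f₂ x) =ᵐ[μ] (fun x => c * f₂ x)

lemma A₀EigenEq.congr_ae {f₁ f₂ f₁' f₂' : α → ℂ} (h : A₀EigenEq μ g u H c f₁ f₂)
    (h₁ : f₁ =ᵐ[μ] f₁') (h₂ : f₂ =ᵐ[μ] f₂') : A₀EigenEq μ g u H c f₁' f₂' := by
  obtain ⟨e₁, e₂⟩ := h
  rw [integral_congr_ae h₁] at e₂
  constructor
  · filter_upwards [e₁, h₁, h₂] with x hx hx₁ hx₂
    rwa [← hx₁, ← hx₂]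
  · filter_upwards [e₂, h₂] with x hx hx₂
    rwa [← hx₂]

namespace IsA₀

variable {A : (Lp ℂ 2 μ × Lp ℂ 2 μ) →L[ℂ] (Lp ℂ 2 μ × Lp ℂ 2 μ)}

lemma apply_eq_smul_iff (hA : IsA₀ μ g u H A) (φ : Lp ℂ 2 μ × Lp ℂ 2 μ) :
    A φ = c • φ ↔ A₀EigenEq μ g u H c φ.1 φ.2 := by
  rw [Prod.ext_iff, Prod.smul_fst, Prod.smul_snd, Lp.ext_iff, Lp.ext_iff,
    (hA φ).1.congr_left, (hA φ).2.congr_left, (Lp.coeFn_smul c φ.1).congr_right,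
    (Lp.coeFn_smul c φ.2).congr_right]
  rfl

lemma exists_eigenvector_iff (hA : IsA₀ μ g u H A) (c : ℂ) :
    (∃ φ : Lp ℂ 2 μ × Lp ℂ 2 μ, φ ≠ 0 ∧ A φ = c • φ) ↔
      ∃ f₁ f₂ : α → ℂ, MemLp f₁ 2 μ ∧ MemLp f₂ 2 μ ∧ ¬(f₁ =ᵐ[μ] 0 ∧ f₂ =ᵐ[μ] 0) ∧
        A₀EigenEq μ g u H c f₁ f₂ := by
  constructor
  · rintro ⟨φ, hφ, hAφ⟩
    refine ⟨φ.1, φ.2, Lp.memLp φ.1, Lp.memLp φ.2, ?_, (hA.apply_eq_smul_iff φ).1 hAφ⟩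
    rwa [← Lp.eq_zero_iff_ae_eq_zero, ← Lp.eq_zero_iff_ae_eq_zero, ← Prod.mk_eq_zero]
  · rintro ⟨f₁, f₂, hf₁, hf₂, hne, heq⟩
    refine ⟨(hf₁.toLp f₁, hf₂.toLp f₂), ?_, (hA.apply_eq_smul_iff _).2 ?_⟩
    · rwa [Ne, Prod.mk_eq_zero, Lp.eq_zero_iff_ae_eq_zero, Lp.eq_zero_iff_ae_eq_zero,
        hf₁.coeFn_toLp.congr_left, hf₂.coeFn_toLp.congr_left]
    · exact heq.congr_ae hf₁.coeFn_toLp.symm hf₂.coeFn_toLp.symm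

end IsA₀

variable {f₁ f₂ : α → ℂ}

lemma A₀EigenEq.ae_eq_of_ae_ne (h : A₀EigenEq μ g u H c f₁ f₂)
    (hne : ∀ᵐ x ∂μ, (u x : ℂ) ≠ c) :
    f₁ =ᵐ[μ] (fun x => g * (∫ y, f₁ y ∂μ) * H x * (c - u x)⁻¹ ^ 2) ∧
      f₂ =ᵐ[μ] (fun x => g * (∫ y, f₁ y ∂μ) * (c - u x)⁻¹) := by
  obtain ⟨e₁, e₂⟩ := h
  have h₂ : f₂ =ᵐ[μ] (fun x => g * (∫ y, f₁ y ∂μ) * (c - u x)⁻¹) := by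
    filter_upwards [e₂, hne] with x hx hx'
    have : c - u x ≠ 0 := sub_ne_zero.2 hx'.symm
    field_simp
    linear_combination -hx
  refine ⟨?_, h₂⟩
  filter_upwards [e₁, h₂, hne] with x hx hx₂ hx'
  have : c - u x ≠ 0 := sub_ne_zero.2 hx'.symm
  rw [hx₂] at hx
  rw [inv_pow, ← div_eq_mul_inv, eq_div_iff (pow_ne_zero 2 this)]
  linear_combination -(c - u x) * hx + H x * g * (∫ y, f₁ y ∂μ) * inv_mul_cancel₀ this

lemma A₀EigenEq.memLp_four_and_integral_eq_one (h : A₀EigenEq μ g u H c f₁ f₂) (hg : g ≠ 0)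
    (hu : AEStronglyMeasurable u μ) {δ : ℝ} (hδ : 0 < δ) (hH : ∀ᵐ x ∂μ, δ ≤ H x)
    (hne : ∀ᵐ x ∂μ, (u x : ℂ) ≠ c) (hf₁ : MemLp f₁ 2 μ) (hf : ¬(f₁ =ᵐ[μ] 0 ∧ f₂ =ᵐ[μ] 0)) :
    MemLp (fun x => (c - u x)⁻¹) 4 μ ∧ ∫ x, (g : ℂ) * H x / (c - u x) ^ 2 ∂μ = 1 := by
  obtain ⟨h₁, h₂⟩ := h.ae_eq_of_ae_ne hne
  set M := ∫ y, f₁ y ∂μ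
  have hM : M ≠ 0 := by
    rintro hM
    refine hf ⟨?_, ?_⟩
    · filter_upwards [h₁] with x hx using by simp [hx, hM]
    · filter_upwards [h₂] with x hx using by simp [hx, hM]
  have hg' : (g : ℂ) ≠ 0 := by exact_mod_cast hg
  have hgM : (g : ℂ) * M ≠ 0 := mul_ne_zero hg' hM
  have hHw : (fun x => (H x : ℂ) * (c - u x)⁻¹ ^ 2) =ᵐ[μ] fun x => (g * M)⁻¹ * f₁ x := by
    filter_upwards [h₁] with x hx
    rw [hx]
    field_simp
  have hw : AEStronglyMeasurable (fun x => (c - (u x : ℂ))⁻¹) μ :=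
    (aemeasurable_const.sub (Complex.measurable_ofReal.comp_aemeasurable hu.aemeasurable)).inv
      |>.aestronglyMeasurable
  refine ⟨(memLp_four_iff_memLp_two_sq hw).2 ?_, ?_⟩
  · refine MemLp.of_mul_left_of_le_norm ((hf₁.const_mul _).ae_eq hHw.symm) (hw.pow 2) hδ ?_
    filter_upwards [hH] with x hx
    rw [Complex.norm_real, Real.norm_eq_abs]
    exact hx.trans (le_abs_self _)
  · calc ∫ x, (g : ℂ) * H x / (c - u x) ^ 2 ∂μ = ∫ x, M⁻¹ * f₁ x ∂μ := by
          refine integral_congr_ae ?_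
          filter_upwards [hHw] with x hx
          rw [div_eq_mul_inv, ← inv_pow, mul_assoc, hx]
          field_simp
      _ = 1 := by rw [integral_const_mul, inv_mul_cancel₀ hM]

lemma exists_a₀EigenEq_of_memLp_four [IsFiniteMeasure μ] (hH : MemLp H ∞ μ)
    (hne : ∀ᵐ x ∂μ, (u x : ℂ) ≠ c) (hw : MemLp (fun x => (c - u x)⁻¹) 4 μ)
    (hF : ∫ x, (g : ℂ) * H x / (c - u x) ^ 2 ∂μ = 1) :
    ∃ f₁ f₂ : α → ℂ, MemLp f₁ 2 μ ∧ MemLp f₂ 2 μ ∧ ¬(f₁ =ᵐ[μ] 0 ∧ f₂ =ᵐ[μ] 0) ∧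
      A₀EigenEq μ g u H c f₁ f₂ := by
  have hF' : ∫ x, (g : ℂ) * H x * (c - u x)⁻¹ ^ 2 ∂μ = 1 := by
    simpa only [div_eq_mul_inv, inv_pow] using hF
  refine ⟨fun x => g * H x * (c - u x)⁻¹ ^ 2, fun x => g * (c - u x)⁻¹, ?_, ?_, ?_, ?_, ?_⟩
  · exact ((memLp_four_iff_memLp_two_sq hw.1).1 hw).mul (p := ∞) (r := 2)
      (hH.ofReal.const_mul (g : ℂ))
  · exact (hw.mono_exponent (by norm_num)).const_mul _
  · rintro ⟨h₁, -⟩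
    rw [integral_congr_ae h₁] at hF'
    simp at hF'
  · filter_upwards [hne] with x hx
    have : c - u x ≠ 0 := sub_ne_zero.2 hx.symm
    field_simp
    ring
  · filter_upwards [hne] with x hx
    have : c - u x ≠ 0 := sub_ne_zero.2 hx.symm
    rw [hF']
    field_simp
    ring

end Operator

lemma exists_memLp_integral_eq_zero_of_measure_pos {μ : Measure ℝ} [IsFiniteMeasure μ]
    [NullSingletonClass μ] {S : Set ℝ} (hS : NullMeasurableSet S μ) (hμS : 0 < μ S) :
    ∃ f : ℝ → ℂ, MemLp f 2 μ ∧ ¬f =ᵐ[μ] 0 ∧ ∫ x, f x ∂μ = 0 ∧ ∀ x ∉ S, f x = 0 := by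
  obtain ⟨T, hTS, hT, hTS'⟩ := hS.exists_measurable_subset_ae_eq
  have hμT : μ T ≠ 0 := by rw [measure_congr hTS']; exact hμS.ne'
  -- `arctan` is bounded and injective, so `arctan - m` cannot vanish a.e. on `T`
  set θ : ℝ → ℂ := fun x => (Real.arctan x : ℂ) with hθ
  set m : ℂ := (μ.real T : ℂ)⁻¹ * ∫ x in T, θ x ∂μ
  have hθ_top : MemLp θ ∞ μ := by
    refine memLp_top_of_bound (by fun_prop) (Real.pi / 2) (.of_forall fun x => ?_)
    rw [hθ, Complex.norm_real, Real.norm_eq_abs, abs_le]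
    exact ⟨(Real.neg_pi_div_two_lt_arctan x).le, (Real.arctan_lt_pi_div_two x).le⟩
  refine ⟨T.indicator fun x => θ x - m, ?_, ?_, ?_,
    fun x hx => Set.indicator_of_notMem (fun h => hx (hTS h)) _⟩
  · exact ((hθ_top.sub (memLp_top_const m)).indicator hT).mono_exponent le_top
  · intro h0
    have hsub : T ⊆ {x | T.indicator (fun x => θ x - m) x ≠ 0} ∪ θ ⁻¹' {m} := by
      intro x hx
      by_cases hfx : T.indicator (fun x => θ x - m) x = 0
      · rw [Set.indicator_of_mem hx, sub_eq_zero] at hfx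
        exact Or.inr hfx
      · exact Or.inl hfx
    have hθinj : θ.Injective := Complex.ofReal_injective.comp Real.arctan_injective
    exact hμT (measure_mono_null hsub (measure_union_null (ae_iff.1 h0)
      ((Set.subsingleton_singleton.preimage hθinj).measure_zero μ)))
  · have hμT' : (μ.real T : ℂ) ≠ 0 := by
      simpa [measureReal_def, ENNReal.toReal_eq_zero_iff] using hμT
    rw [integral_indicator hT, integral_sub (hθ_top.integrable le_top).integrableOn
      (integrable_const m), setIntegral_const, Complex.real_smul, ← mul_assoc,
      mul_inv_cancel₀ hμT', one_mul, sub_self]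

lemma exists_a₀EigenEq_of_measure_pos {μ : Measure ℝ} [IsFiniteMeasure μ] [NullSingletonClass μ]
    {g : ℝ} {u H : ℝ → ℝ} {c : ℂ} (hu : AEMeasurable u μ) (hμ : 0 < μ {x | (u x : ℂ) = c}) :
    ∃ f₁ f₂ : ℝ → ℂ, MemLp f₁ 2 μ ∧ MemLp f₂ 2 μ ∧ ¬(f₁ =ᵐ[μ] 0 ∧ f₂ =ᵐ[μ] 0) ∧
      A₀EigenEq μ g u H c f₁ f₂ := by
  have hS : NullMeasurableSet {x | (u x : ℂ) = c} μ :=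
    (Complex.measurable_ofReal.comp_aemeasurable hu).nullMeasurable (measurableSet_singleton c)
  obtain ⟨f, hf, hf0, hfint, hfS⟩ := exists_memLp_integral_eq_zero_of_measure_pos hS hμ
  refine ⟨f, 0, hf, .zero, fun h => hf0 h.1, .of_forall fun x => ?_, .of_forall fun x => ?_⟩
  · by_cases hx : (u x : ℂ) = c
    · simp [hx]
    · simp [hfS x hx]
  · simp [hfint]

instance : IsFiniteMeasure μ01 := ⟨by simp [μ01, Real.volume_Ioo]⟩

instance : NullSingletonClass μ01 := by unfold μ01; infer_instance

/-- A complex number `c` is an eigenvalue of `A₀` iff either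
`(c-ũ)⁻¹ ∈ L⁴(I)` and `∫₀¹ gH/(c-ũ)² dλ = 1`, or `μ{ũ = c} > 0`. -/
theorem stmt5 (g : ℝ) (hg : 0 < g) (u H : ℝ → ℝ)
    (hu : MemLp u ⊤ μ01) (hH : MemLp H ⊤ μ01)
    (hHpos : 0 < essInf H μ01)
    (A : (Lp ℂ 2 μ01 × Lp ℂ 2 μ01) →L[ℂ] (Lp ℂ 2 μ01 × Lp ℂ 2 μ01))
    (hA : ∀ φ : Lp ℂ 2 μ01 × Lp ℂ 2 μ01,
      ((A φ).1 : ℝ → ℂ) =ᵐ[μ01]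
        (fun x => (u x : ℂ) * (φ.1 : ℝ → ℂ) x + (H x : ℂ) * (φ.2 : ℝ → ℂ) x) ∧
      ((A φ).2 : ℝ → ℂ) =ᵐ[μ01]
        (fun x => (g : ℂ) * (∫ y, (φ.1 : ℝ → ℂ) y ∂μ01) + (u x : ℂ) * (φ.2 : ℝ → ℂ) x))
    (c : ℂ) :
    (∃ φ : Lp ℂ 2 μ01 × Lp ℂ 2 μ01, φ ≠ 0 ∧ A φ = c • φ) ↔
      ((MemLp (fun x => (c - (u x : ℂ))⁻¹) 4 μ01 ∧
          ∫ x, (g : ℂ) * (H x : ℂ) / (c - (u x : ℂ)) ^ 2 ∂μ01 = 1) ∨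
        0 < μ01 {x | (u x : ℂ) = c}) := by
  rw [IsA₀.exists_eigenvector_iff hA]
  by_cases hμ : 0 < μ01 {x | (u x : ℂ) = c}
  · simp only [hμ, or_true, iff_true]
    exact exists_a₀EigenEq_of_measure_pos hu.1.aemeasurable hμ
  have hne : ∀ᵐ x ∂μ01, (u x : ℂ) ≠ c := by
    rw [ae_iff]
    simpa using hμ
  rw [or_iff_left hμ]
  constructor
  · rintro ⟨f₁, f₂, hf₁, -, hf, heq⟩
    exact heq.memLp_four_and_integral_eq_one hg.ne' hu.1 hHpos (MemLp.ae_essInf_le hH) hne hf₁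
      hf
  · rintro ⟨hw, hF⟩
    exact exists_a₀EigenEq_of_memLp_four hH hne hw hF
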